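/- For the mechanism-ONE instance with two equally likely queries, q₁ = {A=(0.2,2,z₁), B=(0.1,1,z₁), E=(1.0,9,z₂)} and q₂ = {C=(0.1,2,z₁), D=(0.2,1,z₁)}, Property E2 holds (E_C[p | z₁, b=1] = E_C[p | z₁, b=2] = 0.15) but selection invariance fails: for f with f(z₁)=0.5, f(z₂)=1, the shown ads are E on q₁ and C on q₂ giving E_f[p | z₁] = 0.1, while for f' with f'(z₁)=1, f'(z₂)=0, the shown ads are A on q₁ and C on q₂ giving E_{f'}[p | z₁] = 0.15. -/

import Mathlib

open Finset Classical

/- Mechanism ONE, two equally likely queries.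
Ads (indexed 0..4): A = (0.2, 2, z₁) and B = (0.1, 1, z₁) and E = (1.0, 9, z₂) on q₁;
C = (0.1, 2, z₁) and D = (0.2, 1, z₁) on q₂.  Buckets: z₁ = 1, z₂ = 2. -/

/-- CTRs of A, B, E, C, D -/
noncomputable def p16 : Fin 5 → ℝ := ![0.2, 0.1, 1.0, 0.1, 0.2]
/-- bids -/
noncomputable def b16 : Fin 5 → ℝ := ![2, 1, 9, 2, 1]
/-- buckets -/
def z16 : Fin 5 → ℕ := ![1, 1, 2, 1, 1]
/-- queries -/
def q16 : Fin 5 → ℕ := ![1, 1, 1, 2, 2]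

/-- ads that can show on query `q'` under map `f` (mechanism ONE) -/
noncomputable def shown16 (f : ℕ → ℝ) (q' : ℕ) : Finset (Fin 5) :=
  Finset.univ.filter
    (fun i => q16 i = q' ∧ ∀ j, q16 j = q' → b16 j * f (z16 j) ≤ b16 i * f (z16 i))

/-- show weight of ad `i` under `f` (queries equally likely, ties uniform) -/
noncomputable def wt16 (f : ℕ → ℝ) (i : Fin 5) : ℝ :=
  if i ∈ shown16 f (q16 i) then 1 / ((shown16 f (q16 i)).card : ℝ) else 0

/-- `E_f[p | z']`: mean CTR over shown ads of bucket `z'` under `f` -/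
noncomputable def obs16 (f : ℕ → ℝ) (z' : ℕ) : ℝ :=
  (∑ i ∈ Finset.univ.filter (fun i => z16 i = z'), wt16 f i * p16 i) /
    (∑ i ∈ Finset.univ.filter (fun i => z16 i = z'), wt16 f i)

/-- the map `f(z₁) = 0.5, f(z₂) = 1` -/
noncomputable def f16 : ℕ → ℝ := fun m => if m = 1 then 0.5 else if m = 2 then 1 else 0
/-- the map `f'(z₁) = 1, f'(z₂) = 0` -/
noncomputable def f16' : ℕ → ℝ := fun m => if m = 1 then 1 else 0

theorem shown16_eq_singleton {f : ℕ → ℝ} {q : ℕ} {i : Fin 5} (hi : q16 i = q)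
    (hmax : ∀ j, q16 j = q → j ≠ i → b16 j * f (z16 j) < b16 i * f (z16 i)) :
    shown16 f q = {i} := by
  ext j
  simp only [shown16, mem_filter, mem_univ, true_and, mem_singleton]
  constructor
  · rintro ⟨hj, hjmax⟩
    by_contra hne
    exact (hjmax i hi).not_gt (hmax j hj hne)
  · rintro rfl
    refine ⟨hi, fun k hk => ?_⟩
    rcases eq_or_ne k j with rfl | hne
    · exact le_rfl
    · exact (hmax k hk hne).le

theorem shown16_f16_one : shown16 f16 1 = {2} :=
  shown16_eq_singleton rfl (by simp [Fin.forall_fin_succ, q16, b16, z16, f16]; norm_num)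

theorem shown16_f16_two : shown16 f16 2 = {3} :=
  shown16_eq_singleton rfl (by simp [Fin.forall_fin_succ, q16, b16, z16, f16]; norm_num)

theorem shown16_f16'_one : shown16 f16' 1 = {0} :=
  shown16_eq_singleton rfl (by simp [Fin.forall_fin_succ, q16, b16, z16, f16'])

theorem shown16_f16'_two : shown16 f16' 2 = {3} :=
  shown16_eq_singleton rfl (by simp [Fin.forall_fin_succ, q16, b16, z16, f16'])

theorem filter_z16_eq_one : univ.filter (fun i : Fin 5 => z16 i = 1) = {0, 1, 3, 4} := by
  ext i; simp only [mem_filter, mem_univ, true_and]; revert i; simp [Fin.forall_fin_succ, z16]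

theorem filter_z16_b16_eq_one_one :
    univ.filter (fun i : Fin 5 => z16 i = 1 ∧ b16 i = 1) = {1, 4} := by
  ext i; simp only [mem_filter, mem_univ, true_and]; revert i; simp [Fin.forall_fin_succ, z16, b16]

theorem filter_z16_b16_eq_one_two :
    univ.filter (fun i : Fin 5 => z16 i = 1 ∧ b16 i = 2) = {0, 3} := by
  ext i; simp only [mem_filter, mem_univ, true_and]; revert i; simp [Fin.forall_fin_succ, z16, b16]

theorem obs16_f16_one : obs16 f16 1 = 0.1 := by
  rw [obs16, filter_z16_eq_one]
  simp [wt16, q16, shown16_f16_one, shown16_f16_two, p16]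

theorem obs16_f16'_one : obs16 f16' 1 = 0.15 := by
  rw [obs16, filter_z16_eq_one]
  simp [wt16, q16, shown16_f16'_one, shown16_f16'_two, p16]
  norm_num

/-- Property E2 holds: `E_C[p | z₁, b=1] = E_C[p | z₁, b=2] = 0.15`.  But selection
invariance fails: under `f` the shown ads are E on q₁ and C on q₂, so
`E_f[p | z₁] = 0.1`, while under `f'` they are A on q₁ and C on q₂, so
`E_{f'}[p | z₁] = 0.15`. -/
theorem propE2_without_selection_invariance_ONE :
    ((∑ i ∈ Finset.univ.filter (fun i => z16 i = 1 ∧ b16 i = 1), p16 i) /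
        ((Finset.univ.filter (fun i : Fin 5 => z16 i = 1 ∧ b16 i = 1)).card : ℝ) = 0.15) ∧
    ((∑ i ∈ Finset.univ.filter (fun i => z16 i = 1 ∧ b16 i = 2), p16 i) /
        ((Finset.univ.filter (fun i : Fin 5 => z16 i = 1 ∧ b16 i = 2)).card : ℝ) = 0.15) ∧
    (shown16 f16 1 = {2} ∧ shown16 f16 2 = {3}) ∧
    (shown16 f16' 1 = {0} ∧ shown16 f16' 2 = {3}) ∧
    obs16 f16 1 = 0.1 ∧ obs16 f16' 1 = 0.15 ∧ obs16 f16 1 ≠ obs16 f16' 1 := by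
  refine ⟨?_, ?_, ⟨shown16_f16_one, shown16_f16_two⟩, ⟨shown16_f16'_one, shown16_f16'_two⟩,
    obs16_f16_one, obs16_f16'_one, by rw [obs16_f16_one, obs16_f16'_one]; norm_num⟩
  · rw [filter_z16_b16_eq_one_one]; simp [p16]; norm_num
  · rw [filter_z16_b16_eq_one_two]; simp [p16]; norm_num
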